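/- arXiv:1305.2610 — 3 statements merged into one kernel-verified Lean document; each statement's English description precedes it below -/
import Mathlib

section
/- For every k ≥ 1 and every p ∈ Δ_k, the sequence of iterates (F^n(p))_{n≥1} converges (to a point of the closed simplex). -/
/-!
Write `y i` (`i < k`) for the first `k` coordinates and `t` for the last one, so that
`F_i(x) = y_i (y_i + 2t)`. This recursion preserves the order of the `y_i` and their ties. The
largest coordinate `m` stays bounded below, because `t ≥ 1 - k m`, and then each ratio `y_j / m`
with `y_j < m` shrinks by a factor bounded away from `1`, so non-maximal coordinates decay
geometrically. If `c` coordinates are maximal, `t = 1 - c m + o(1)`, and `m` follows the Newton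
iteration `m ↦ m (2 - (2c - 1) m)` for `(2c - 1)⁻¹` up to a vanishing perturbation. Convergence
of the last coordinate follows from `Σ y_i + t = 1`.
-/

open Filter Topology

/-- The map F on ℝ^{k+1} (coordinates indexed 0,…,k; the last coordinate is the
"empty" state).  For i < k, F_i(x) = x_i² + 2 x_i x_k; the last coordinate is
F_k(x) = x_k² + 2 Σ_{a<b<k} x_a x_b. -/
noncomputable def Fmap (k : ℕ) (x : Fin (k + 1) → ℝ) : Fin (k + 1) → ℝ :=
  fun i =>
    if i.val < k then x i ^ 2 + 2 * x i * x (Fin.last k)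
    else x (Fin.last k) ^ 2 +
      2 * ∑ a : Fin (k + 1), ∑ b : Fin (k + 1),
        (if a.val < b.val ∧ b.val < k then x a * x b else 0)

/-- The open simplex Δ_k ⊆ ℝ^{k+1}. -/
def simplex (k : ℕ) : Set (Fin (k + 1) → ℝ) :=
  {p | (∑ i, p i) = 1 ∧ ∀ i, 0 < p i}

theorem Finset.two_mul_sum_sum_ite_lt {ι R : Type*} [LinearOrder ι] [CommRing R]
    (s : Finset ι) (f : ι → R) :
    2 * ∑ a ∈ s, ∑ b ∈ s, (if a < b then f a * f b else 0) =
      (∑ a ∈ s, f a) ^ 2 - ∑ a ∈ s, f a ^ 2 := by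
  have hsplit : ∀ a b, f a * f b = (if a < b then f a * f b else 0) +
      (if b < a then f b * f a else 0) + (if a = b then f a ^ 2 else 0) := by
    intro a b
    rcases lt_trichotomy a b with h | rfl | h
    · simp [h, h.ne, h.not_gt]
    · simp [sq]
    · simp [h, h.ne', h.not_gt, mul_comm]
  have hsq : (∑ a ∈ s, f a) ^ 2 = ∑ a ∈ s, ∑ b ∈ s, f a * f b := by
    rw [sq, Finset.sum_mul_sum]
  rw [hsq, Finset.sum_congr rfl fun a _ => Finset.sum_congr rfl fun b _ => hsplit a b]
  simp only [Finset.sum_add_distrib, Finset.sum_ite_eq,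
    Finset.sum_comm (f := fun a b => if b < a then f b * f a else 0)]
  rw [Finset.sum_ite_mem, Finset.inter_self]
  ring

theorem Fmap_castSucc (k : ℕ) (x : Fin (k + 1) → ℝ) (i : Fin k) :
    Fmap k x i.castSucc = x i.castSucc * (x i.castSucc + 2 * x (Fin.last k)) := by
  simp only [Fmap, Fin.val_castSucc, i.is_lt, if_true]
  ring

theorem Fmap_last (k : ℕ) (x : Fin (k + 1) → ℝ) :
    Fmap k x (Fin.last k) = x (Fin.last k) ^ 2 +
      2 * ∑ a : Fin k, ∑ b : Fin k, if a < b then x a.castSucc * x b.castSucc else 0 := by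
  simp [Fmap, Fin.sum_univ_castSucc, (Fin.castSucc_lt_last _).not_gt]

theorem sum_Fmap (k : ℕ) (x : Fin (k + 1) → ℝ) : ∑ i, Fmap k x i = (∑ i, x i) ^ 2 := by
  have hpairs := Finset.two_mul_sum_sum_ite_lt Finset.univ fun a : Fin k => x a.castSucc
  simp only [Fin.sum_univ_castSucc (f := Fmap k x), Fin.sum_univ_castSucc (f := x),
    Fmap_castSucc, Fmap_last, hpairs, mul_add, ← sq, Finset.sum_add_distrib, ← Finset.sum_mul]
  ring

theorem mapsTo_Fmap_simplex (k : ℕ) : Set.MapsTo (Fmap k) (simplex k) (simplex k) := by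
  rintro x ⟨hsum, hpos⟩
  refine ⟨by rw [sum_Fmap, hsum, one_pow], Fin.lastCases ?_ fun i => ?_⟩
  · rw [Fmap_last]
    have : 0 ≤ ∑ a : Fin k, ∑ b : Fin k, if a < b then x a.castSucc * x b.castSucc else 0 :=
      Finset.sum_nonneg fun a _ => Finset.sum_nonneg fun b _ => by
        split_ifs
        exacts [(mul_pos (hpos _) (hpos _)).le, le_rfl]
    exact add_pos_of_pos_of_nonneg (pow_pos (hpos _) 2) (by positivity)
  · rw [Fmap_castSucc]
    exact mul_pos (hpos _) (by linarith [hpos i.castSucc, hpos (Fin.last k)])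

theorem tendsto_zero_of_le_mul_add {a e : ℕ → ℝ} {r : ℝ} (hr0 : 0 ≤ r) (hr1 : r < 1)
    (ha : ∀ n, 0 ≤ a n) (hae : ∀ n, a (n + 1) ≤ r * a n + e n)
    (he : Tendsto e atTop (𝓝 0)) : Tendsto a atTop (𝓝 0) := by
  refine tendsto_order.2 ⟨fun b hb => .of_forall fun n => hb.trans_le (ha n), fun ε hε => ?_⟩
  obtain ⟨N, hN⟩ := eventually_atTop.1 <|
    he.eventually (gt_mem_nhds (show 0 < (1 - r) * (ε / 2) by nlinarith))
  have hexcess : ∀ i, a (N + i) - ε / 2 ≤ r ^ i * (a N - ε / 2) := by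
    intro i
    induction i with
    | zero => simp
    | succ i ih =>
      calc a (N + i + 1) - ε / 2 ≤ r * (a (N + i) - ε / 2) := by
            linarith [hae (N + i), hN (N + i) (Nat.le_add_right N i)]
        _ ≤ r * (r ^ i * (a N - ε / 2)) := mul_le_mul_of_nonneg_left ih hr0
        _ = r ^ (i + 1) * (a N - ε / 2) := by ring
  have hgeom : Tendsto (fun i => r ^ i * (a N - ε / 2)) atTop (𝓝 0) := by
    simpa using (tendsto_pow_atTop_nhds_zero_of_lt_one hr0 hr1).mul_const (a N - ε / 2)
  obtain ⟨M, hM⟩ := eventually_atTop.1 (hgeom.eventually (gt_mem_nhds (half_pos hε)))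
  refine eventually_atTop.2 ⟨N + M, fun n hn => ?_⟩
  obtain ⟨i, rfl⟩ := Nat.exists_eq_add_of_le (le_of_add_le_left hn)
  linarith [hexcess i, hM i (by omega)]

/-- `x ↦ x * (2 - a * x)` is Newton's iteration for `a⁻¹`: it squares the error, since
`a⁻¹ - x * (2 - a * x) = a * (x - a⁻¹) ^ 2`. -/
theorem tendsto_inv_of_eq_mul_sub {m e : ℕ → ℝ} {a d : ℝ} (ha : 0 < a) (hd : 0 < d)
    (hdm : ∀ n, d ≤ m n) (he0 : ∀ n, 0 ≤ e n) (he : Tendsto e atTop (𝓝 0))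
    (hm : ∀ n, m (n + 1) = m n * (2 - a * m n) - e n) : Tendsto m atTop (𝓝 a⁻¹) := by
  set A : ℕ → ℝ := fun n => a⁻¹ - m (n + 1)
  have hA : ∀ n, A n = a * (m n - a⁻¹) ^ 2 + e n := fun n => by
    simp only [A, hm]
    field_simp
    ring
  have hA0 : ∀ n, 0 ≤ A n := fun n => by
    rw [hA]
    exact add_nonneg (mul_nonneg ha.le (sq_nonneg _)) (he0 n)
  have hAstep : ∀ n, A (n + 1) ≤ max 0 (1 - a * d) * A n + e (n + 1) := fun n => by
    have hlip : a * A n ≤ max 0 (1 - a * d) := by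
      refine le_max_of_le_right ?_
      simp only [A, mul_sub, mul_inv_cancel₀ ha.ne']
      nlinarith [hdm (n + 1)]
    have : A (n + 1) = a * A n * A n + e (n + 1) := by
      rw [hA]
      simp only [A]
      ring
    rw [this]
    nlinarith [hA0 n]
  have hA_lim : Tendsto A atTop (𝓝 0) :=
    tendsto_zero_of_le_mul_add (le_max_left _ _) (max_lt one_pos (by nlinarith)) hA0 hAstep
      ((tendsto_add_atTop_iff_nat 1).2 he)
  refine (tendsto_add_atTop_iff_nat 1).1 ?_
  simpa [A] using (tendsto_const_nhds (x := a⁻¹)).sub hA_lim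

/-- If `m ≤ (2K - 1)⁻¹` the factor `m + 2t` is at least `1`, otherwise `m * (m + 2t) ≥ m ^ 2`. -/
theorem le_mul_add_two_mul {K m t : ℝ} (hK : 1 ≤ K) (hm : 0 < m) (ht : 0 ≤ t)
    (hKt : 1 - K * m ≤ t) : min m ((2 * K - 1)⁻¹ ^ 2) ≤ m * (m + 2 * t) := by
  have hK' : 0 < 2 * K - 1 := by linarith
  rcases le_or_gt m (2 * K - 1)⁻¹ with hsmall | hlarge
  · refine (min_le_left _ _).trans (le_mul_of_one_le_right hm.le ?_)
    have : (2 * K - 1) * m ≤ 1 := by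
      simpa [mul_inv_cancel₀ hK'.ne'] using mul_le_mul_of_nonneg_left hsmall hK'.le
    linarith
  · refine (min_le_right _ _).trans ?_
    nlinarith [pow_le_pow_left₀ (by positivity) hlarge.le 2]

theorem add_two_mul_le_mul_add_two_mul {a b t ρ d : ℝ} (hρ : ρ ≤ 1) (hab : a ≤ ρ * b)
    (hd : 0 ≤ d) (hdb : d ≤ b) (hbt : b + 2 * t ≤ 2) :
    a + 2 * t ≤ (1 - d * (1 - ρ) / 2) * (b + 2 * t) := by
  nlinarith [mul_nonneg (sub_nonneg.2 hρ) (sub_nonneg.2 hdb),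
    mul_nonneg (sub_nonneg.2 hρ) (mul_nonneg hd (sub_nonneg.2 hbt))]

structure IsFmapOrbit {ι : Type*} [Fintype ι] (y : ℕ → ι → ℝ) (t : ℕ → ℝ) : Prop where
  pos : ∀ n i, 0 < y n i
  nonneg_last : ∀ n, 0 ≤ t n
  sum_add_last : ∀ n, ∑ i, y n i + t n = 1
  succ : ∀ n i, y (n + 1) i = y n i * (y n i + 2 * t n)

namespace IsFmapOrbit

variable {ι : Type*} [Fintype ι] {y : ℕ → ι → ℝ} {t : ℕ → ℝ}

theorem eq_of_eq (h : IsFmapOrbit y t) {i j : ι} (hij : y 0 i = y 0 j) (n : ℕ) :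
    y n i = y n j := by
  induction n with
  | zero => exact hij
  | succ n ih => rw [h.succ, h.succ, ih]

theorem le_of_le (h : IsFmapOrbit y t) {i j : ι} (hij : y 0 i ≤ y 0 j) (n : ℕ) :
    y n i ≤ y n j := by
  induction n with
  | zero => exact hij
  | succ n ih =>
    rw [h.succ, h.succ]
    have := h.nonneg_last n
    exact mul_le_mul ih (by linarith) (by linarith [h.pos n i]) (h.pos n j).le

theorem le_sum (h : IsFmapOrbit y t) (n : ℕ) (i : ι) : y n i ≤ ∑ j, y n j :=
  Finset.single_le_sum (fun j _ => (h.pos n j).le) (Finset.mem_univ i)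

theorem last_le_one (h : IsFmapOrbit y t) (n : ℕ) : t n ≤ 1 := by
  linarith [h.sum_add_last n, Finset.sum_nonneg fun j (_ : j ∈ Finset.univ) => (h.pos n j).le]

theorem le_one (h : IsFmapOrbit y t) (n : ℕ) (i : ι) : y n i ≤ 1 := by
  linarith [h.le_sum n i, h.sum_add_last n, h.nonneg_last n]

theorem exists_pos_le_of_isMax (h : IsFmapOrbit y t) {i : ι} (hi : ∀ j, y 0 j ≤ y 0 i) :
    ∃ d > 0, ∀ n, d ≤ y n i := by
  set K : ℝ := (Fintype.card ι : ℝ)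
  have hK : 1 ≤ K := Nat.one_le_cast.2 (Fintype.card_pos_iff.2 ⟨i⟩)
  -- the coordinates of the orbit never overtake the `i`-th one, so `t n ≥ 1 - K * y n i`
  have hlast : ∀ n, 1 - K * y n i ≤ t n := fun n => by
    have := Finset.sum_le_card_nsmul Finset.univ (fun j => y n j) (y n i)
      fun j _ => h.le_of_le (hi j) n
    rw [nsmul_eq_mul, Finset.card_univ] at this
    linarith [h.sum_add_last n]
  have hK' : 0 < 2 * K - 1 := by linarith
  refine ⟨min (y 0 i) ((2 * K - 1)⁻¹ ^ 2), lt_min (h.pos 0 i) (by positivity), fun n => ?_⟩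
  induction n with
  | zero => exact min_le_left _ _
  | succ n ih =>
    rw [h.succ]
    exact (le_min ih (min_le_right _ _)).trans
      (le_mul_add_two_mul hK (h.pos n i) (h.nonneg_last n) (hlast n))

theorem tendsto_zero_of_lt (h : IsFmapOrbit y t) {i j : ι} (hi : ∀ j, y 0 j ≤ y 0 i)
    (hji : y 0 j < y 0 i) : Tendsto (fun n => y n j) atTop (𝓝 0) := by
  obtain ⟨d, hd, hdy⟩ := h.exists_pos_le_of_isMax hi
  set ρ := y 0 j / y 0 i
  have hρ1 : ρ < 1 := (div_lt_one (h.pos 0 i)).2 hji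
  have hρ0 : 0 ≤ ρ := (div_pos (h.pos 0 j) (h.pos 0 i)).le
  set γ := 1 - d * (1 - ρ) / 2
  have hγ0 : 0 ≤ γ := by simp only [γ]; nlinarith [mul_nonneg hd.le hρ0, hdy 0, h.le_one 0 i]
  have hγ1 : γ < 1 := by simp only [γ]; nlinarith [mul_pos hd (sub_pos.2 hρ1)]
  have hbound : ∀ n, y n j ≤ ρ * γ ^ n * y n i := by
    intro n
    induction n with
    | zero => simp [ρ, div_mul_cancel₀ _ (h.pos 0 i).ne']
    | succ n ih =>
      have hle : y n j ≤ ρ * y n i := ih.trans <| by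
        have := pow_le_one₀ hγ0 hγ1.le (n := n)
        nlinarith [mul_nonneg (mul_nonneg hρ0 (h.pos n i).le) (sub_nonneg.2 this)]
      have hstep := add_two_mul_le_mul_add_two_mul (t := t n) hρ1.le hle hd.le (hdy n)
        (by linarith [h.le_sum n i, h.sum_add_last n, h.last_le_one n])
      rw [h.succ, h.succ]
      calc y n j * (y n j + 2 * t n) ≤ ρ * γ ^ n * y n i * (y n j + 2 * t n) :=
            mul_le_mul_of_nonneg_right ih (by linarith [h.pos n j, h.nonneg_last n])
        _ ≤ ρ * γ ^ n * y n i * (γ * (y n i + 2 * t n)) :=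
            mul_le_mul_of_nonneg_left hstep (by have := h.pos n i; positivity)
        _ = ρ * γ ^ (n + 1) * (y n i * (y n i + 2 * t n)) := by ring
  refine squeeze_zero (g := fun n => ρ * γ ^ n) (fun n => (h.pos n j).le)
    (fun n => (hbound n).trans ?_) ?_
  · exact mul_le_of_le_one_right (by positivity) (h.le_one n i)
  · simpa using (tendsto_pow_atTop_nhds_zero_of_lt_one hγ0 hγ1).const_mul ρ

theorem tendsto_of_isMax (h : IsFmapOrbit y t) {i : ι} (hi : ∀ j, y 0 j ≤ y 0 i) :
    Tendsto (fun n => y n i) atTop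
      (𝓝 (2 * (Finset.univ.filter fun j => y 0 j = y 0 i).card - 1 : ℝ)⁻¹) := by
  obtain ⟨d, hd, hdy⟩ := h.exists_pos_le_of_isMax hi
  set c : ℝ := ((Finset.univ.filter fun j => y 0 j = y 0 i).card : ℝ)
  have hc : 1 ≤ c := Nat.one_le_cast.2 (Finset.card_pos.2 ⟨i, by simp⟩)
  set s : ℕ → ℝ := fun n => ∑ j ∈ Finset.univ.filter (fun j => y 0 j ≠ y 0 i), y n j
  have hs0 : ∀ n, 0 ≤ s n := fun n => Finset.sum_nonneg fun j _ => (h.pos n j).le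
  have hs : Tendsto s atTop (𝓝 0) := by
    simpa using tendsto_finsetSum _ fun j hj =>
      h.tendsto_zero_of_lt hi ((hi j).lt_of_ne (Finset.mem_filter.1 hj).2)
  have hsum : ∀ n, ∑ j, y n j = c * y n i + s n := fun n => by
    rw [← Finset.sum_filter_add_sum_filter_not Finset.univ (fun j => y 0 j = y 0 i),
      Finset.sum_congr rfl fun j hj => h.eq_of_eq (Finset.mem_filter.1 hj).2 n,
      Finset.sum_const, nsmul_eq_mul]
  have he0 : ∀ n, 0 ≤ 2 * y n i * s n := fun n => mul_nonneg (by linarith [h.pos n i]) (hs0 n)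
  refine tendsto_inv_of_eq_mul_sub (by linarith) hd hdy he0 ?_ fun n => ?_
  · refine squeeze_zero he0 (fun n => ?_) (by simpa using hs.const_mul 2)
    nlinarith [h.le_one n i, hs0 n]
  · have hlast : t n = 1 - c * y n i - s n := by linarith [h.sum_add_last n, hsum n]
    rw [h.succ, hlast]
    ring

theorem exists_tendsto (h : IsFmapOrbit y t) (i : ι) :
    ∃ a, Tendsto (fun n => y n i) atTop (𝓝 a) := by
  by_cases hi : ∀ j, y 0 j ≤ y 0 i
  · exact ⟨_, h.tendsto_of_isMax hi⟩
  · obtain ⟨i₀, -, hi₀⟩ := Finset.exists_max_image Finset.univ (y 0) ⟨i, Finset.mem_univ i⟩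
    obtain ⟨j, hj⟩ := not_forall.1 hi
    exact ⟨0, h.tendsto_zero_of_lt (fun j => hi₀ j (Finset.mem_univ j))
      ((not_le.1 hj).trans_le (hi₀ j (Finset.mem_univ j)))⟩

theorem exists_tendsto_last (h : IsFmapOrbit y t) : ∃ a, Tendsto t atTop (𝓝 a) := by
  choose a ha using h.exists_tendsto
  refine ⟨1 - ∑ i, a i, (tendsto_const_nhds.sub (tendsto_finsetSum _ fun i _ => ha i)).congr
    fun n => ?_⟩
  linarith [h.sum_add_last n]

end IsFmapOrbit

theorem isFmapOrbit_iterate {k : ℕ} {p : Fin (k + 1) → ℝ} (hp : p ∈ simplex k) :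
    IsFmapOrbit (fun n (i : Fin k) => (Fmap k)^[n] p i.castSucc)
      (fun n => (Fmap k)^[n] p (Fin.last k)) where
  pos n i := (((mapsTo_Fmap_simplex k).iterate n hp).2 _)
  nonneg_last n := (((mapsTo_Fmap_simplex k).iterate n hp).2 _).le
  sum_add_last n := by
    rw [← Fin.sum_univ_castSucc]
    exact ((mapsTo_Fmap_simplex k).iterate n hp).1
  succ n i := by rw [Function.iterate_succ_apply', Fmap_castSucc]

theorem iterates_converge_general (k : ℕ) (p : Fin (k + 1) → ℝ)
    (hp : p ∈ simplex k) :
    ∃ l : Fin (k + 1) → ℝ, ((∑ i, l i) = 1 ∧ ∀ i, 0 ≤ l i) ∧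
      Tendsto (fun n => (Fmap k)^[n] p) atTop (𝓝 l) := by
  have horbit := isFmapOrbit_iterate hp
  have hcoord : ∀ i, ∃ a, Tendsto (fun n => (Fmap k)^[n] p i) atTop (𝓝 a) :=
    Fin.lastCases horbit.exists_tendsto_last horbit.exists_tendsto
  choose l hl using hcoord
  have hlim : Tendsto (fun n => (Fmap k)^[n] p) atTop (𝓝 l) := tendsto_pi_nhds.2 hl
  have hmem : l ∈ stdSimplex ℝ (Fin (k + 1)) :=
    (isClosed_stdSimplex ℝ (Fin (k + 1))).mem_of_tendsto hlim <| .of_forall fun n =>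
      have hn := (mapsTo_Fmap_simplex k).iterate n hp
      ⟨fun i => (hn.2 i).le, hn.1⟩
  exact ⟨l, hmem.symm, hlim⟩

/-- For every k ≥ 1 and every p ∈ Δ_k, the iterates F^n(p) converge to a point
of the closed simplex. -/
theorem iterates_converge (k : ℕ) (hk : 1 ≤ k) (p : Fin (k + 1) → ℝ)
    (hp : p ∈ simplex k) :
    ∃ l : Fin (k + 1) → ℝ, ((∑ i, l i) = 1 ∧ ∀ i, 0 ≤ l i) ∧
      Tendsto (fun n => (Fmap k)^[n] p) atTop (𝓝 l) :=
  iterates_converge_general k p hp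
end

section
/- Let k ≥ 1 and p ∈ Δ_k with p_1 = p_2 = … = p_k. Then F^n(p) converges, as n → ∞, to the vector (1/(2k−1), …, 1/(2k−1), (k−1)/(2k−1)), whose first k coordinates equal 1/(2k−1) and whose last coordinate equals (k−1)/(2k−1). -/
open Filter Topology

/-!
On the line of points whose first `k` coordinates are equal, `F` acts through the single
coordinate `t` as the logistic-type map `t ↦ 2t - (2k-1)t²`. Writing `c = 2k - 1`, the
substitution `u = 1 - ct` conjugates it to `u ↦ u²`, so `u_n = u_0 ^ 2 ^ n`. A point of the
open simplex has `0 < t < 1/k`, hence `0 < ct < 2` and `|u_0| < 1`; so `u_n → 0`, `t_n → 1/c`,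
and the last coordinate `1 - k t_n` tends to `(k-1)/c`.
-/

lemma two_mul_sum_pairs_lt (k : ℕ) :
    2 * ∑ a : Fin (k + 1), ∑ b : Fin (k + 1),
      (if a.val < b.val ∧ b.val < k then (1 : ℝ) else 0) = k * (k - 1) := by
  have h_inner (b : Fin (k + 1)) :
      ∑ a : Fin (k + 1), (if a.val < b.val ∧ b.val < k then (1 : ℝ) else 0) =
        if b.val < k then (b.val : ℝ) else 0 := by
    split_ifs with hb
    · simp [hb, Finset.sum_boole, Finset.filter_gt_eq_Iio, Fin.card_Iio]
    · simp [hb]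
  have h_gauss : ∑ i ∈ Finset.range k, (i : ℝ) = k.choose 2 := by
    rw [← Nat.cast_sum, Finset.sum_range_id, Nat.choose_two_right]
  rw [Finset.sum_comm, Finset.sum_congr rfl fun b _ => h_inner b, Fin.sum_univ_castSucc]
  simp only [Fin.val_castSucc, Fin.is_lt, if_true, Fin.val_last, lt_irrefl, if_false, add_zero]
  rw [Fin.sum_univ_eq_sum_range (fun i => (i : ℝ)), h_gauss, Nat.cast_choose_two]
  ring

def logisticMap (c t : ℝ) : ℝ := 2 * t - c * t ^ 2

lemma one_sub_mul_logisticMap (c t : ℝ) : 1 - c * logisticMap c t = (1 - c * t) ^ 2 := by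
  rw [logisticMap]
  ring

lemma one_sub_mul_iterate_logisticMap (c t : ℝ) (n : ℕ) :
    1 - c * (logisticMap c)^[n] t = (1 - c * t) ^ 2 ^ n := by
  induction n with
  | zero => simp
  | succ n ih =>
    rw [Function.iterate_succ_apply', one_sub_mul_logisticMap, ih, ← pow_mul, ← pow_succ]

lemma tendsto_iterate_logisticMap {c t : ℝ} (hc : c ≠ 0) (ht : |1 - c * t| < 1) :
    Tendsto (fun n => (logisticMap c)^[n] t) atTop (𝓝 c⁻¹) := by
  have h_pow : Tendsto (fun n : ℕ => (1 - c * t) ^ 2 ^ n) atTop (𝓝 0) :=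
    (tendsto_pow_atTop_nhds_zero_of_abs_lt_one ht).comp
      (tendsto_pow_atTop_atTop_of_one_lt one_lt_two)
  have h_lim := (h_pow.const_sub 1).div_const c
  rw [sub_zero, one_div] at h_lim
  refine h_lim.congr fun n => ?_
  rw [← one_sub_mul_iterate_logisticMap, sub_sub_cancel, mul_div_cancel_left₀ _ hc]

noncomputable def diagonalPoint (k : ℕ) (t : ℝ) : Fin (k + 1) → ℝ :=
  fun i => if i.val < k then t else 1 - k * t

lemma continuous_diagonalPoint (k : ℕ) : Continuous (diagonalPoint k) :=
  continuous_pi fun i => by unfold diagonalPoint; split_ifs <;> fun_prop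

lemma Fmap_diagonalPoint (k : ℕ) (t : ℝ) :
    Fmap k (diagonalPoint k t) = diagonalPoint k (logisticMap (2 * k - 1) t) := by
  have h_pairs : ∑ a : Fin (k + 1), ∑ b : Fin (k + 1),
      (if a.val < b.val ∧ b.val < k then diagonalPoint k t a * diagonalPoint k t b else 0) =
      t ^ 2 * ∑ a : Fin (k + 1), ∑ b : Fin (k + 1),
        (if a.val < b.val ∧ b.val < k then (1 : ℝ) else 0) := by
    simp only [Finset.mul_sum, mul_ite, mul_one, mul_zero]
    refine Finset.sum_congr rfl fun a _ => Finset.sum_congr rfl fun b _ => ?_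
    split_ifs with h
    · simp [diagonalPoint, h.1.trans h.2, h.2, sq]
    · rfl
  funext i
  by_cases hi : i.val < k
  · simp only [Fmap, diagonalPoint, hi, if_true, Fin.val_last, lt_irrefl, if_false, logisticMap]
    ring
  · simp only [Fmap, hi, if_false, h_pairs]
    simp only [diagonalPoint, hi, Fin.val_last, lt_irrefl, if_false, logisticMap]
    linear_combination t ^ 2 * two_mul_sum_pairs_lt k

lemma iterate_Fmap_diagonalPoint (k : ℕ) (t : ℝ) (n : ℕ) :
    (Fmap k)^[n] (diagonalPoint k t) = diagonalPoint k ((logisticMap (2 * k - 1))^[n] t) :=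
  (Function.Semiconj.iterate_right (fun t => (Fmap_diagonalPoint k t).symm) n t).symm

lemma eq_diagonalPoint_of_sum_eq_one {k : ℕ} {p : Fin (k + 1) → ℝ} (hsum : ∑ i, p i = 1)
    (heq : ∀ a b : Fin (k + 1), a.val < k → b.val < k → p a = p b) :
    p = diagonalPoint k (p 0) := by
  have h_first (i : Fin k) : p i.castSucc = p 0 := heq _ _ i.is_lt i.pos
  rw [Fin.sum_univ_castSucc, Finset.sum_congr rfl fun i _ => h_first i] at hsum
  simp only [Finset.sum_const, Finset.card_univ, Fintype.card_fin, nsmul_eq_mul] at hsum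
  funext i
  by_cases hi : i.val < k
  · rw [diagonalPoint, if_pos hi]
    exact heq _ _ hi (i.val.zero_le.trans_lt hi)
  · rw [diagonalPoint, if_neg hi, Fin.eq_last_of_not_lt hi]
    linarith

/-- If p_1 = ⋯ = p_k then F^n(p) → (1/(2k−1),…,1/(2k−1),(k−1)/(2k−1)). -/
theorem tendsto_of_all_equal (k : ℕ) (hk : 1 ≤ k) (p : Fin (k + 1) → ℝ)
    (hp : p ∈ simplex k)
    (heq : ∀ a b : Fin (k + 1), a.val < k → b.val < k → p a = p b) :
    Tendsto (fun n => (Fmap k)^[n] p) atTop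
      (𝓝 (fun j => if j.val < k then 1 / (2 * (k : ℝ) - 1)
                    else ((k : ℝ) - 1) / (2 * (k : ℝ) - 1))) := by
  obtain ⟨hsum, hpos⟩ := hp
  have hk_real : (1 : ℝ) ≤ k := by exact_mod_cast hk
  have hc : (2 * k - 1 : ℝ) ≠ 0 := by linarith
  have hp_diag := eq_diagonalPoint_of_sum_eq_one hsum heq
  have h_start : |1 - (2 * k - 1) * p 0| < 1 := by
    have h_last := hpos (Fin.last k)
    rw [hp_diag, diagonalPoint, if_neg (by simp)] at h_last
    rw [abs_lt]
    constructor <;> nlinarith [hpos 0]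
  have h_limit : diagonalPoint k (2 * k - 1 : ℝ)⁻¹ = fun j => if j.val < k
      then 1 / (2 * (k : ℝ) - 1) else ((k : ℝ) - 1) / (2 * (k : ℝ) - 1) := by
    funext j
    unfold diagonalPoint
    split_ifs
    · rw [one_div]
    · linear_combination -mul_inv_cancel₀ hc
  rw [← h_limit]
  refine (((continuous_diagonalPoint k).tendsto _).comp
    (tendsto_iterate_logisticMap hc h_start)).congr fun n => ?_
  rw [Function.comp_apply, ← iterate_Fmap_diagonalPoint, ← hp_diag]
end

section
/- Let k ≥ 2 and p ∈ Δ_k with p_1 ≥ p_2 ≥ … ≥ p_k, and suppose p_1 = … = p_i > p_{i+1} for some i ∈ {1,…,k−1}. Then F^n(p) converges, as n → ∞, to the vector whose first i coordinates equal 1/(2i−1), whose coordinates i+1 through k equal 0, and whose last coordinate equals (i−1)/(2i−1). -/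
/-
F preserves the simplex (the coordinates of F x sum to (∑ x)²), and on each of the first k
coordinates it acts by the same increasing map t ↦ t (t + 2 s), s the last coordinate, so the
i leaders stay equal and dominate the other coordinates. Hence a leader a stays bounded away
from 0, and the ratio of the runner-up b to a leader contracts by a fixed factor at every step,
b' / a' = (b / a) (b + 2 s) / (a + 2 s). All non-leading coordinates therefore vanish
geometrically, their total mass ε = 1 - s - i a included, and the leader obeys
a' = a (2 - (2 i - 1) a) - 2 ε a: a geometrically small perturbation of a map with the
superattracting fixed point 1 / (2 i - 1).
-/

open Filter Topology

open Finset

theorem sq_sum_eq_sum_sq_add_two_mul_sum_lt {ι R : Type*} [Fintype ι] [LinearOrder ι]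
    [CommRing R] (x : ι → R) :
    (∑ a, x a) ^ 2 = ∑ a, x a ^ 2 + 2 * ∑ a, ∑ b, if a < b then x a * x b else 0 := by
  have hsplit : ∀ a b, x a * x b = (if a < b then x a * x b else 0) +
      (if a = b then x a ^ 2 else 0) + (if b < a then x b * x a else 0) := by
    intro a b
    rcases lt_trichotomy a b with h | rfl | h
    · rw [if_pos h, if_neg h.ne, if_neg h.not_gt]; ring
    · rw [if_neg (lt_irrefl a), if_pos rfl]; ring
    · rw [if_neg h.not_gt, if_neg h.ne', if_pos h]; ring
  rw [sq, Fintype.sum_mul_sum,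
    sum_congr rfl fun a _ => sum_congr rfl fun b _ => hsplit a b]
  simp only [sum_add_distrib, sum_ite_eq, mem_univ, if_true]
  rw [sum_comm (f := fun a b => if b < a then x b * x a else 0)]
  ring

theorem sum_mem_Icc_of_eq_of_le {n i : ℕ} (hi : i ≤ n) {y : Fin n → ℝ} {a b : ℝ}
    (hpre : ∀ j : Fin n, j.val < i → y j = a) (hsuf : ∀ j : Fin n, i ≤ j.val → 0 ≤ y j ∧ y j ≤ b) :
    ∑ j, y j ∈ Set.Icc (i * a) (i * a + (n - i) * b) := by
  have hcard : #{j : Fin n | j.val < i} = i := by rw [Fin.card_filter_val_lt, min_eq_right hi]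
  have hcard' : #{j : Fin n | ¬ j.val < i} = n - i := by
    have := card_filter_add_card_filter_not (s := univ) (fun j : Fin n => j.val < i)
    rw [hcard, card_univ, Fintype.card_fin] at this
    omega
  rw [← sum_filter_add_sum_filter_not univ (fun j : Fin n => j.val < i),
    sum_congr rfl fun j hj => hpre j (mem_filter.1 hj).2, sum_const, hcard, nsmul_eq_mul]
  have hsuf' : ∀ j ∈ ({j : Fin n | ¬ j.val < i} : Finset _), 0 ≤ y j ∧ y j ≤ b :=
    fun j hj => hsuf j (not_lt.1 (mem_filter.1 hj).2)
  refine ⟨by simpa using sum_nonneg fun j hj => (hsuf' j hj).1, ?_⟩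
  have := sum_le_card_nsmul _ _ _ fun j hj => (hsuf' j hj).2
  rw [hcard', nsmul_eq_mul, Nat.cast_sub hi] at this
  linarith

theorem le_of_forall_succ_le {α : Type*} [Preorder α] {n k : ℕ} (hkn : k < n) {p : Fin n → α}
    (hp : ∀ j : ℕ, (hj : j + 1 < k) → p ⟨j + 1, by omega⟩ ≤ p ⟨j, by omega⟩) {l j : ℕ}
    (hlj : l ≤ j) (hj : j < k) : p ⟨j, by omega⟩ ≤ p ⟨l, by omega⟩ := by
  induction j, hlj using Nat.le_induction with
  | base => exact le_rfl
  | succ j hlj ih => exact (hp j hj).trans (ih (by omega))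

namespace Fmap

variable {k : ℕ}

theorem apply_of_lt (x : Fin (k + 1) → ℝ) {j : Fin (k + 1)} (hj : j.val < k) :
    Fmap k x j = x j * (x j + 2 * x (Fin.last k)) := by
  simp only [Fmap, if_pos hj]; ring

theorem sum_eq_sq_sum (x : Fin (k + 1) → ℝ) : ∑ j, Fmap k x j = (∑ j, x j) ^ 2 := by
  have hD : (∑ a : Fin (k + 1), ∑ b : Fin (k + 1),
      if a.val < b.val ∧ b.val < k then x a * x b else 0) =
      ∑ a : Fin k, ∑ b : Fin k, if a < b then x a.castSucc * x b.castSucc else 0 := by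
    have : ∀ j : Fin k, ¬ Fin.last k < j.castSucc := fun j => (Fin.castSucc_lt_last j).not_gt
    simp [Fin.sum_univ_castSucc, this]
  rw [Fin.sum_univ_castSucc, Fin.sum_univ_castSucc (f := x), add_sq,
    sq_sum_eq_sum_sq_add_two_mul_sum_lt]
  simp only [Fmap, Fin.val_castSucc, Fin.is_lt, if_true, Fin.val_last, lt_irrefl, if_false, hD,
    sum_add_distrib, sum_mul, mul_sum]
  ring

theorem last_pos {x : Fin (k + 1) → ℝ} (hx : ∀ j, 0 < x j) : 0 < Fmap k x (Fin.last k) := by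
  have hD : 0 ≤ ∑ a : Fin (k + 1), ∑ b : Fin (k + 1),
      if a.val < b.val ∧ b.val < k then x a * x b else 0 :=
    sum_nonneg fun a _ => sum_nonneg fun b _ => by
      split_ifs
      exacts [(mul_pos (hx a) (hx b)).le, le_rfl]
  have := hx (Fin.last k)
  simp only [Fmap, Fin.val_last, lt_irrefl, if_false]
  positivity

theorem mapsTo_simplex : Set.MapsTo (Fmap k) (simplex k) (simplex k) := by
  rintro x ⟨hsum, hpos⟩
  refine ⟨by rw [sum_eq_sq_sum, hsum, one_pow], fun j => ?_⟩
  rcases Fin.eq_castSucc_or_eq_last j with ⟨j, rfl⟩ | rfl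
  · have := hpos (Fin.last k)
    have := hpos j.castSucc
    rw [apply_of_lt x (by simp)]
    positivity
  · exact last_pos hpos

theorem apply_le_apply {x : Fin (k + 1) → ℝ} (hx : ∀ j, 0 ≤ x j) {j l : Fin (k + 1)}
    (hj : j.val < k) (hl : l.val < k) (h : x j ≤ x l) : Fmap k x j ≤ Fmap k x l := by
  have := hx j
  have := hx l
  have := hx (Fin.last k)
  rw [apply_of_lt x hj, apply_of_lt x hl]
  gcongr

theorem iterate_apply_le_iterate_apply {p : Fin (k + 1) → ℝ} (hp : p ∈ simplex k)
    {j l : Fin (k + 1)} (hj : j.val < k) (hl : l.val < k) (h : p j ≤ p l) (n : ℕ) :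
    (Fmap k)^[n] p j ≤ (Fmap k)^[n] p l := by
  induction n with
  | zero => exact h
  | succ n ih =>
    rw [Function.iterate_succ_apply']
    exact apply_le_apply (fun i => ((mapsTo_simplex.iterate n hp).2 i).le) hj hl ih

end Fmap

theorem le_mul_add_two_mul_of_one_sub_le {δ a s L : ℝ} (hL : 0 < L) (hδa : δ ≤ a)
    (hδL : δ ≤ 1 / (4 * L ^ 2)) (ha : 0 ≤ a) (hs : 0 ≤ s) (hu : 1 - s ≤ L * a) :
    δ ≤ a * (a + 2 * s) := by
  -- either `a + 2 * s ≥ 1`, or `s < 1 / 2` and then `a > 1 / (2 * L)`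
  rcases le_or_gt (1 / 2) s with hs2 | hs2
  · nlinarith
  · have h2La : 1 ≤ 2 * L * a := by linarith
    have : 1 / (4 * L ^ 2) ≤ a ^ 2 := by
      rw [div_le_iff₀ (by positivity)]; nlinarith
    nlinarith

theorem min_le_of_recurrence {a s : ℕ → ℝ} {L : ℝ} (hL : 0 < L)
    (ha : ∀ n, a (n + 1) = a n * (a n + 2 * s n)) (ha0 : 0 ≤ a 0) (hs : ∀ n, 0 ≤ s n)
    (hu : ∀ n, 1 - s n ≤ L * a n) (n : ℕ) : min (a 0) (1 / (4 * L ^ 2)) ≤ a n := by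
  induction n with
  | zero => exact min_le_left _ _
  | succ n ih =>
    rw [ha]
    have hδ0 : 0 ≤ min (a 0) (1 / (4 * L ^ 2)) := le_min ha0 (by positivity)
    exact le_mul_add_two_mul_of_one_sub_le hL ih (min_le_right _ _) (hδ0.trans ih) (hs n) (hu n)

theorem mul_add_two_mul_le_of_le_mul {δ a b s r ρ : ℝ} (hδ0 : 0 ≤ δ) (hδa : δ ≤ a) (ha1 : a ≤ 1)
    (hs0 : 0 ≤ s) (hs1 : s ≤ 1) (hb : 0 ≤ b) (hba : b ≤ r * a) (hr0 : 0 ≤ r) (hrρ : r ≤ ρ)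
    (hρ1 : ρ ≤ 1) :
    b * (b + 2 * s) ≤ r * (1 - (1 - ρ) * δ / 3) * (a * (a + 2 * s)) := by
  have ha0 : 0 ≤ a := hδ0.trans hδa
  have hmono : b * (b + 2 * s) ≤ r * a * (r * a + 2 * s) := by gcongr
  -- `r * a + 2 * s = (a + 2 * s) - (1 - r) * a`, and `a + 2 * s ≤ 3`
  have hgap : (1 - ρ) * δ * (a + 2 * s) ≤ 3 * ((1 - r) * a) := by
    have h1 : (1 - ρ) * δ ≤ (1 - r) * a := mul_le_mul (by linarith) hδa hδ0 (by linarith)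
    have h2 : 0 ≤ (1 - ρ) * δ := mul_nonneg (by linarith) hδ0
    nlinarith
  nlinarith [mul_le_mul_of_nonneg_left hgap (mul_nonneg hr0 ha0)]

theorem exists_le_and_le_mul_pow_of_recurrence {a b s : ℕ → ℝ} {L : ℝ} (hL : 0 < L)
    (ha : ∀ n, a (n + 1) = a n * (a n + 2 * s n)) (hb : ∀ n, b (n + 1) = b n * (b n + 2 * s n))
    (hba0 : b 0 < a 0) (hb0 : ∀ n, 0 ≤ b n) (ha1 : ∀ n, a n ≤ 1) (hs0 : ∀ n, 0 ≤ s n)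
    (hs1 : ∀ n, s n ≤ 1) (hu : ∀ n, 1 - s n ≤ L * a n) :
    ∃ δ > 0, ∃ r ≥ 0, ∃ θ, 0 ≤ θ ∧ θ < 1 ∧ ∀ n, δ ≤ a n ∧ b n ≤ r * θ ^ n := by
  have ha0 : 0 < a 0 := (hb0 0).trans_lt hba0
  set δ := min (a 0) (1 / (4 * L ^ 2))
  have hδa : ∀ n, δ ≤ a n := min_le_of_recurrence hL ha ha0.le hs0 hu
  have hδ0 : 0 < δ := lt_min ha0 (by positivity)
  set r := b 0 / a 0
  have hr0 : 0 ≤ r := div_nonneg (hb0 0) ha0.le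
  have hr1 : r < 1 := (div_lt_one ha0).2 hba0
  set θ := 1 - (1 - r) * δ / 3 with hθ
  have hθ0 : 0 ≤ θ := by nlinarith [hδa 0, ha1 0]
  have hθ1 : θ < 1 := by nlinarith [mul_pos (sub_pos.2 hr1) hδ0]
  have hbθ : ∀ n, b n ≤ r * θ ^ n * a n := by
    intro n
    induction n with
    | zero => rw [pow_zero, mul_one, div_mul_cancel₀ _ ha0.ne']
    | succ n ih =>
      have hrθ : r * θ ^ n ≤ r := mul_le_of_le_one_right hr0 (pow_le_one₀ hθ0 hθ1.le)
      calc b (n + 1) = b n * (b n + 2 * s n) := hb n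
        _ ≤ r * θ ^ n * θ * (a n * (a n + 2 * s n)) :=
          mul_add_two_mul_le_of_le_mul hδ0.le (hδa n) (ha1 n) (hs0 n) (hs1 n) (hb0 n) ih
            (mul_nonneg hr0 (pow_nonneg hθ0 n)) hrθ hr1.le
        _ = r * θ ^ (n + 1) * a (n + 1) := by rw [ha, pow_succ]; ring
  refine ⟨δ, hδ0, r, hr0, θ, hθ0, hθ1, fun n => ⟨hδa n, (hbθ n).trans ?_⟩⟩
  exact mul_le_of_le_one_right (mul_nonneg hr0 (pow_nonneg hθ0 n)) (ha1 n)

theorem tendsto_zero_of_le_mul_add_mul_pow {e : ℕ → ℝ} {μ C θ : ℝ} (hμ0 : 0 ≤ μ) (hμ1 : μ < 1)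
    (hθ0 : 0 ≤ θ) (hθ1 : θ < 1) (hC : 0 ≤ C) (he : ∀ n, 0 ≤ e n)
    (hstep : ∀ n, e (n + 1) ≤ μ * e n + C * θ ^ n) :
    Tendsto e atTop (𝓝 0) := by
  set ν := max μ θ
  have hν0 : 0 ≤ ν := hμ0.trans (le_max_left _ _)
  have hν1 : ν < 1 := max_lt hμ1 hθ1
  set ρ := (1 + ν) / 2 with hρ
  have hνρ : ν < ρ := by linarith
  set A := max (e 0) (C / (ρ - ν))
  have hAC : C ≤ A * (ρ - ν) := (div_le_iff₀ (by linarith)).1 (le_max_right _ _)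
  have hbound : ∀ n, e n ≤ A * ρ ^ n := by
    intro n
    induction n with
    | zero => rw [pow_zero, mul_one]; exact le_max_left _ _
    | succ n ih =>
      have hμe : μ * e n ≤ ν * (A * ρ ^ n) := mul_le_mul (le_max_left _ _) ih (he n) hν0
      have hθρ : θ ^ n ≤ ρ ^ n := pow_le_pow_left₀ hθ0 ((le_max_right _ _).trans hνρ.le) n
      calc e (n + 1) ≤ μ * e n + C * θ ^ n := hstep n
        _ ≤ ν * (A * ρ ^ n) + A * (ρ - ν) * ρ ^ n := by
          gcongr
        _ = A * ρ ^ (n + 1) := by ring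
  refine squeeze_zero he hbound ?_
  simpa using (tendsto_pow_atTop_nhds_zero_of_lt_one (by linarith) (by linarith)).const_mul A

theorem abs_mul_add_two_mul_sub_le {a c δ s : ℝ} (hc : 1 ≤ c) (hδ0 : 0 ≤ δ) (hδa : δ ≤ a)
    (hs : 0 ≤ s) (hmass : c * a ≤ 1 - s) :
    |a * (a + 2 * s) - 1 / (2 * c - 1)| ≤
      max (1 - (2 * c - 1) * δ) (1 - 1 / c) * |a - 1 / (2 * c - 1)| + 2 * (1 - s - c * a) := by
  set m := 2 * c - 1
  set μ := max (1 - m * δ) (1 - 1 / c)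
  have hm0 : 0 < m := by linarith
  have hmm : m * (1 / m) = 1 := by field_simp
  have ha0 : 0 ≤ a := hδ0.trans hδa
  have ha1 : a ≤ 1 := by nlinarith
  have hid : a * (a + 2 * s) - 1 / m = -(m * (a - 1 / m) ^ 2) - 2 * (1 - s - c * a) * a := by
    field_simp; ring
  have hcontr : m * |a - 1 / m| ≤ μ := by
    rcases abs_cases (a - 1 / m) with ⟨habs, -⟩ | ⟨habs, -⟩ <;> rw [habs]
    · have : m * a ≤ m / c := by rw [le_div_iff₀ (by linarith)]; nlinarith
      have : m / c = 2 - 1 / c := by field_simp; ring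
      exact le_max_of_le_right (by linarith)
    · exact le_max_of_le_left (by nlinarith)
  have hμ0 : 0 ≤ μ := le_max_of_le_right (by rw [sub_nonneg, div_le_one (by linarith)]; exact hc)
  have hsq : m * (a - 1 / m) ^ 2 ≤ μ * |a - 1 / m| := by
    rw [← sq_abs, sq, ← mul_assoc]
    exact mul_le_mul_of_nonneg_right hcontr (abs_nonneg _)
  have hε : 0 ≤ 1 - s - c * a := by linarith
  have hεa : (1 - s - c * a) * a ≤ 1 - s - c * a := mul_le_of_le_one_right hε ha1
  have := mul_nonneg hm0.le (sq_nonneg (a - 1 / m))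
  have := mul_nonneg hμ0 (abs_nonneg (a - 1 / m))
  have := mul_nonneg hε ha0
  rw [hid, abs_le]
  constructor <;> linarith

theorem tendsto_of_leader_recurrence {a b s : ℕ → ℝ} {c K : ℝ} (hc : 1 ≤ c) (hK : 0 ≤ K)
    (ha : ∀ n, a (n + 1) = a n * (a n + 2 * s n)) (hb : ∀ n, b (n + 1) = b n * (b n + 2 * s n))
    (hba0 : b 0 < a 0) (hb0 : ∀ n, 0 ≤ b n) (hba : ∀ n, b n ≤ a n) (hs0 : ∀ n, 0 ≤ s n)
    (hmass : ∀ n, 1 - s n ∈ Set.Icc (c * a n) (c * a n + K * b n)) :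
    Tendsto a atTop (𝓝 (1 / (2 * c - 1))) ∧ Tendsto b atTop (𝓝 0) ∧
      Tendsto s atTop (𝓝 ((c - 1) / (2 * c - 1))) := by
  have ha0 n : 0 ≤ a n := (hb0 n).trans (hba n)
  have ha1 n : a n ≤ 1 := by nlinarith [(hmass n).1, hs0 n, ha0 n]
  have hs1 n : s n ≤ 1 := by nlinarith [(hmass n).1, ha0 n]
  have hu n : 1 - s n ≤ (c + K) * a n := by
    nlinarith [(hmass n).2, mul_le_mul_of_nonneg_left (hba n) hK]
  obtain ⟨δ, hδ0, r, hr0, θ, hθ0, hθ1, hbound⟩ := exists_le_and_le_mul_pow_of_recurrence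
    (by linarith) ha hb hba0 hb0 ha1 hs0 hs1 hu
  have hgeom : Tendsto (fun n => r * θ ^ n) atTop (𝓝 0) := by
    simpa using (tendsto_pow_atTop_nhds_zero_of_lt_one hθ0 hθ1).const_mul r
  have hε n : 1 - s n - c * a n ≤ K * (r * θ ^ n) := by
    nlinarith [(hmass n).2, mul_le_mul_of_nonneg_left (hbound n).2 hK]
  have hε_lim : Tendsto (fun n => 1 - s n - c * a n) atTop (𝓝 0) :=
    squeeze_zero (fun n => by linarith [(hmass n).1]) hε (by simpa using hgeom.const_mul K)
  have ha_lim : Tendsto a atTop (𝓝 (1 / (2 * c - 1))) := by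
    rw [tendsto_iff_dist_tendsto_zero]
    refine tendsto_zero_of_le_mul_add_mul_pow (μ := max (1 - (2 * c - 1) * δ) (1 - 1 / c))
      (C := 2 * K * r) (le_max_of_le_right ?_) (max_lt ?_ ?_) hθ0 hθ1 (by positivity)
      (fun n => dist_nonneg) fun n => ?_
    · rw [sub_nonneg, div_le_one (by linarith)]; exact hc
    · nlinarith
    · have : 0 < 1 / c := by positivity
      linarith
    · simp only [Real.dist_eq, ha]
      refine (abs_mul_add_two_mul_sub_le hc hδ0.le (hbound n).1 (hs0 n) (hmass n).1).trans ?_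
      linarith [hε n]
  refine ⟨ha_lim, squeeze_zero hb0 (fun n => (hbound n).2) hgeom, ?_⟩
  have hm : 2 * c - 1 ≠ 0 := by linarith
  have : (c - 1) / (2 * c - 1) = 1 - c * (1 / (2 * c - 1)) - 0 := by
    rw [sub_zero, mul_one_div, eq_sub_iff_add_eq, ← add_div, div_eq_one_iff_eq hm]
    ring
  rw [this]
  exact ((tendsto_const_nhds.sub (ha_lim.const_mul c)).sub hε_lim).congr fun n => by ring

theorem tendsto_pi_of_eq_of_le {k i : ℕ} {x : ℕ → Fin (k + 1) → ℝ} {a b : ℕ → ℝ} {α σ : ℝ}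
    (hlead : ∀ n j, j.val < i → x n j = a n)
    (hrest : ∀ n j, i ≤ j.val → j.val < k → 0 ≤ x n j ∧ x n j ≤ b n)
    (ha : Tendsto a atTop (𝓝 α)) (hb : Tendsto b atTop (𝓝 0))
    (hs : Tendsto (fun n => x n (Fin.last k)) atTop (𝓝 σ)) :
    Tendsto x atTop (𝓝 fun j => if j.val < i then α else if j.val < k then 0 else σ) := by
  refine tendsto_pi_nhds.2 fun j => ?_
  rcases lt_or_ge j.val i with hji | hij
  · rw [if_pos hji]
    exact ha.congr fun n => (hlead n j hji).symm
  rcases lt_or_ge j.val k with hjk | hkj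
  · rw [if_neg hij.not_gt, if_pos hjk]
    exact squeeze_zero (fun n => (hrest n j hij hjk).1) (fun n => (hrest n j hij hjk).2) hb
  · obtain rfl : j = Fin.last k := Fin.ext (by simp; omega)
    rwa [if_neg hij.not_gt, if_neg (by simp)]

/-- If p_1 ≥ ⋯ ≥ p_k and p_1 = ⋯ = p_i > p_{i+1} for some 1 ≤ i ≤ k−1
(0-indexed: coordinates 0,…,i−1 are equal and > coordinate i), then F^n(p)
converges to the vector whose first i coordinates are 1/(2i−1), whose
coordinates i+1,…,k are 0, and whose last coordinate is (i−1)/(2i−1). -/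
theorem tendsto_of_strict_leader (k : ℕ) (p : Fin (k + 1) → ℝ)
    (hp : p ∈ simplex k)
    (hsort : ∀ j : ℕ, (hj : j + 1 < k) →
      p ⟨j + 1, by omega⟩ ≤ p ⟨j, by omega⟩)
    (i : ℕ) (hi1 : 1 ≤ i) (hik : i < k)
    (heq : ∀ j : ℕ, (hj : j < i) → p ⟨j, by omega⟩ = p 0)
    (hlt : p ⟨i, by omega⟩ < p 0) :
    Tendsto (fun n => (Fmap k)^[n] p) atTop
      (𝓝 (fun j => if j.val < i then 1 / (2 * (i : ℝ) - 1)
                    else if j.val < k then 0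
                    else ((i : ℝ) - 1) / (2 * (i : ℝ) - 1))) := by
  set x := fun n => (Fmap k)^[n] p
  have hx n : x n ∈ simplex k := Fmap.mapsTo_simplex.iterate n hp
  have hsorted n {l j : ℕ} (hlj : l ≤ j) (hj : j < k) : x n ⟨j, by omega⟩ ≤ x n ⟨l, by omega⟩ :=
    Fmap.iterate_apply_le_iterate_apply hp hj (show l < k by omega)
      (le_of_forall_succ_le k.lt_succ_self hsort hlj hj) n
  have hlead n (j : Fin (k + 1)) (hj : j.val < i) : x n j = x n 0 :=
    le_antisymm (hsorted n (Nat.zero_le _) (by omega))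
      (Fmap.iterate_apply_le_iterate_apply hp (by simp; omega) (show j.val < k by omega)
        (heq j hj).ge n)
  have hrest n (j : Fin (k + 1)) (hij : i ≤ j.val) (hjk : j.val < k) :
      0 ≤ x n j ∧ x n j ≤ x n ⟨i, by omega⟩ := ⟨((hx n).2 j).le, hsorted n hij hjk⟩
  have hmass n : 1 - x n (Fin.last k) ∈
      Set.Icc (i * x n 0) (i * x n 0 + (k - i) * x n ⟨i, by omega⟩) := by
    rw [← (hx n).1, Fin.sum_univ_castSucc, add_sub_cancel_right]
    exact sum_mem_Icc_of_eq_of_le hik.le (fun j hj => hlead n _ hj)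
      (fun j hj => hrest n _ hj j.isLt)
  have hstep n (j : Fin (k + 1)) (hj : j.val < k) :
      x (n + 1) j = x n j * (x n j + 2 * x n (Fin.last k)) := by
    simp only [x, Function.iterate_succ_apply']; exact Fmap.apply_of_lt _ hj
  obtain ⟨ha, hb, hs⟩ := tendsto_of_leader_recurrence (by exact_mod_cast hi1)
    (by simpa using hik.le) (fun n => hstep n 0 (by simp; omega)) (fun n => hstep n _ hik) hlt
    (fun n => (hrest n _ le_rfl hik).1) (fun n => hsorted n (Nat.zero_le _) hik)
    (fun n => ((hx n).2 _).le) hmass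
  exact tendsto_pi_of_eq_of_le hlead hrest ha hb hs
end
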